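/- arXiv:2107.08290 — 8 statements merged into one kernel-verified Lean document; each statement's English description precedes it below -/
import Mathlib

section
/- Let K be a field and let n ≥ 3 be an integer. Suppose F ∈ K[X,Y,Z] is a homogeneous polynomial of degree n+1 such that F(X,Y,0) = αXYⁿ, F(X,0,Z) = βZXⁿ, and F(0,Y,Z) = γYZⁿ for some α, β, γ ∈ K. Then there exists a polynomial G ∈ K[X,Y,Z], which is either zero or homogeneous of degree n−2, such that F(X,Y,Z) = αXYⁿ + βZXⁿ + γYZⁿ + XYZ·G(X,Y,Z). -/
open MvPolynomial

private lemma aux_dvd_sub {K : Type*} [CommRing K] (i : Fin 3) (f : MvPolynomial (Fin 3) K) :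
    X i ∣ f - aeval (fun j => if j = i then (0 : MvPolynomial (Fin 3) K) else X j) f := by
  induction f using MvPolynomial.induction_on with
  | C a => simp
  | add p q hp hq =>
      rw [map_add]
      have h : p + q - (aeval (fun j => if j = i then (0 : MvPolynomial (Fin 3) K) else X j) p
          + aeval (fun j => if j = i then (0 : MvPolynomial (Fin 3) K) else X j) q)
          = (p - aeval (fun j => if j = i then (0 : MvPolynomial (Fin 3) K) else X j) p)
          + (q - aeval (fun j => if j = i then (0 : MvPolynomial (Fin 3) K) else X j) q) := by ring
      rw [h]; exact dvd_add hp hq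
  | mul_X p j hp =>
      rw [map_mul, aeval_X]
      by_cases h : j = i
      · subst h; rw [if_pos rfl, mul_zero, sub_zero]; exact dvd_mul_left _ _
      · rw [if_neg h]
        have h2 : p * X j - aeval (fun j => if j = i then (0 : MvPolynomial (Fin 3) K) else X j) p * X j
            = (p - aeval (fun j => if j = i then (0 : MvPolynomial (Fin 3) K) else X j) p) * X j := by ring
        rw [h2]; exact hp.mul_right _

private lemma aux_X_dvd_iff {K : Type*} [CommRing K] (i : Fin 3) (f : MvPolynomial (Fin 3) K) :
    X i ∣ f ↔ aeval (fun j => if j = i then (0 : MvPolynomial (Fin 3) K) else X j) f = 0 := by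
  constructor
  · rintro ⟨c, rfl⟩
    rw [map_mul, aeval_X, if_pos rfl, zero_mul]
  · intro h
    have := aux_dvd_sub i f
    rwa [h, sub_zero] at this

private lemma aux_prime_X {K : Type*} [Field K] (i : Fin 3) :
    Prime (X i : MvPolynomial (Fin 3) K) := by
  refine ⟨X_ne_zero i, ?_, ?_⟩
  · intro hu
    have := hu.map (constantCoeff (σ := Fin 3) (R := K))
    rw [constantCoeff_X] at this
    exact not_isUnit_zero this
  · intro a b hab
    rw [aux_X_dvd_iff, map_mul] at hab
    rw [aux_X_dvd_iff, aux_X_dvd_iff]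
    exact mul_eq_zero.mp hab

/-- If `F ∈ K[X,Y,Z]` is homogeneous of degree `n+1` with `F(X,Y,0) = αXYⁿ`,
`F(X,0,Z) = βZXⁿ` and `F(0,Y,Z) = γYZⁿ`, then
`F = αXYⁿ + βZXⁿ + γYZⁿ + XYZ·G` with `G` zero or homogeneous of degree `n-2`. -/
theorem stmt_0 {K : Type*} [Field K] (n : ℕ) (hn : 3 ≤ n)
    (F : MvPolynomial (Fin 3) K) (hF : F.IsHomogeneous (n + 1)) (α β γ : K)
    (h1 : aeval ![(X 0 : MvPolynomial (Fin 3) K), X 1, 0] F = C α * X 0 * X 1 ^ n)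
    (h2 : aeval ![(X 0 : MvPolynomial (Fin 3) K), 0, X 2] F = C β * X 2 * X 0 ^ n)
    (h3 : aeval ![(0 : MvPolynomial (Fin 3) K), X 1, X 2] F = C γ * X 1 * X 2 ^ n) :
    ∃ G : MvPolynomial (Fin 3) K, (G = 0 ∨ G.IsHomogeneous (n - 2)) ∧
      F = C α * X 0 * X 1 ^ n + C β * X 2 * X 0 ^ n + C γ * X 1 * X 2 ^ n +
        X 0 * X 1 * X 2 * G := by
  have hn0 : n ≠ 0 := by omega
  set T : MvPolynomial (Fin 3) K :=
    C α * X 0 * X 1 ^ n + C β * X 2 * X 0 ^ n + C γ * X 1 * X 2 ^ n with hTdef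
  set H : MvPolynomial (Fin 3) K := F - T with hHdef
  -- substitutions kill H
  have e2 : aeval (fun j => if j = (2 : Fin 3) then (0 : MvPolynomial (Fin 3) K) else X j) H = 0 := by
    have hfun : (fun j => if j = (2 : Fin 3) then (0 : MvPolynomial (Fin 3) K) else X j)
        = ![(X 0 : MvPolynomial (Fin 3) K), X 1, 0] := by
      funext j; fin_cases j <;> simp
    rw [hfun, hHdef, hTdef, map_sub, h1]
    simp [zero_pow hn0]
  have e1 : aeval (fun j => if j = (1 : Fin 3) then (0 : MvPolynomial (Fin 3) K) else X j) H = 0 := by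
    have hfun : (fun j => if j = (1 : Fin 3) then (0 : MvPolynomial (Fin 3) K) else X j)
        = ![(X 0 : MvPolynomial (Fin 3) K), 0, X 2] := by
      funext j; fin_cases j <;> simp
    rw [hfun, hHdef, hTdef, map_sub, h2]
    simp [zero_pow hn0]
  have e0 : aeval (fun j => if j = (0 : Fin 3) then (0 : MvPolynomial (Fin 3) K) else X j) H = 0 := by
    have hfun : (fun j => if j = (0 : Fin 3) then (0 : MvPolynomial (Fin 3) K) else X j)
        = ![(0 : MvPolynomial (Fin 3) K), X 1, X 2] := by
      funext j; fin_cases j <;> simp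
    rw [hfun, hHdef, hTdef, map_sub, h3]
    simp [zero_pow hn0]
  have d0 : X 0 ∣ H := (aux_X_dvd_iff 0 H).mpr e0
  have d1 : X 1 ∣ H := (aux_X_dvd_iff 1 H).mpr e1
  have d2 : X 2 ∣ H := (aux_X_dvd_iff 2 H).mpr e2
  obtain ⟨c, hc⟩ := d0
  have hd1c : X 1 ∣ c := by
    rw [hc] at d1
    refine ((aux_prime_X 1).dvd_or_dvd d1).resolve_left ?_
    intro h; exact absurd (X_dvd_X.mp h) (by decide)
  obtain ⟨d, hd⟩ := hd1c
  have hd2d : X 2 ∣ d := by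
    rw [hc, hd] at d2
    have h' := ((aux_prime_X 2).dvd_or_dvd d2).resolve_left
      (fun h => absurd (X_dvd_X.mp h) (by decide))
    exact ((aux_prime_X 2).dvd_or_dvd h').resolve_left
      (fun h => absurd (X_dvd_X.mp h) (by decide))
  obtain ⟨G, hG⟩ := hd2d
  have hHG : H = X 0 * X 1 * X 2 * G := by rw [hc, hd, hG]; ring
  refine ⟨G, ?_, by rw [← sub_eq_iff_eq_add', ← hHdef, hHG]⟩
  -- homogeneity
  rcases eq_or_ne G 0 with h | h
  · exact Or.inl h
  · right
    have hT1 : (C α * X 0 * X 1 ^ n : MvPolynomial (Fin 3) K).IsHomogeneous (n + 1) := by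
      rw [show n + 1 = 0 + 1 + 1 * n by ring]
      exact ((isHomogeneous_C (Fin 3) α).mul (isHomogeneous_X K 0)).mul
        ((isHomogeneous_X K 1).pow n)
    have hT2 : (C β * X 2 * X 0 ^ n : MvPolynomial (Fin 3) K).IsHomogeneous (n + 1) := by
      rw [show n + 1 = 0 + 1 + 1 * n by ring]
      exact ((isHomogeneous_C (Fin 3) β).mul (isHomogeneous_X K 2)).mul
        ((isHomogeneous_X K 0).pow n)
    have hT3 : (C γ * X 1 * X 2 ^ n : MvPolynomial (Fin 3) K).IsHomogeneous (n + 1) := by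
      rw [show n + 1 = 0 + 1 + 1 * n by ring]
      exact ((isHomogeneous_C (Fin 3) γ).mul (isHomogeneous_X K 1)).mul
        ((isHomogeneous_X K 2).pow n)
    have hH : H.IsHomogeneous (n + 1) := hF.sub ((hT1.add hT2).add hT3)
    -- coefficient argument
    set e : Fin 3 →₀ ℕ := Finsupp.single 0 1 + Finsupp.single 1 1 + Finsupp.single 2 1 with hedef
    have hmon : (X 0 * X 1 * X 2 : MvPolynomial (Fin 3) K) = monomial e 1 := by
      rw [hedef, X, X, X, monomial_mul, monomial_mul, one_mul, one_mul]
    intro m hm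
    have hcoeff : coeff (e + m) H ≠ 0 := by
      rw [hHG, hmon, coeff_monomial_mul, one_mul]
      exact hm
    have hdeg : (Finsupp.weight (1 : Fin 3 → ℕ)) (e + m) = n + 1 := hH hcoeff
    have hedeg : (Finsupp.weight (1 : Fin 3 → ℕ)) e = 3 := by
      rw [hedef, map_add, map_add]
      simp [Finsupp.weight_apply]
    rw [map_add, hedeg] at hdeg
    show (Finsupp.weight (1 : Fin 3 → ℕ)) m = n - 2
    omega
end

section
/- Let n ≥ 3 be an integer, let S = {s(n−1)+1 : s ∈ ℤ, 1 ≤ s ≤ n} ⊆ ℕ, and let ⟨S⟩ be the additive submonoid of ℕ generated by S. Then the complement ℕ \ ⟨S⟩ equals the set G_n := {(i−1)(n−1)+j : i, j ∈ ℤ, 1 ≤ i ≤ j ≤ n−1}. -/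
/-!
Write `d = n - 1`. A sum of `k` generators `s * d + 1` is `t * d + k` with `k ≤ t ≤ k * (d + 1)`,
and every such number is attained. A positive `m = q * d + r` with `1 ≤ r ≤ d` has this form iff
`r ≤ q`: if `t * d + k = q * d + r` with `k ≤ t`, comparing residues modulo `d` forces `r ≤ k` and
`t ≤ q`; conversely `k = r + c * d`, `t = q - c` with `c = ⌊(q - r) / (d + 1)⌋` works. So the gaps
are the numbers `q * d + r` with `q < r ≤ d`, which is `G_n` with `i = q + 1`, `j = r`.
-/

theorem mem_closure_mul_add_one_iff {d L U m : ℕ} :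
    m ∈ AddSubmonoid.closure {x : ℕ | ∃ s, L ≤ s ∧ s ≤ U ∧ x = s * d + 1} ↔
      ∃ k t, k * L ≤ t ∧ t ≤ k * U ∧ m = t * d + k := by
  constructor
  · intro hm
    induction hm using AddSubmonoid.closure_induction with
    | mem x hx =>
      obtain ⟨s, hLs, hsU, rfl⟩ := hx
      exact ⟨1, s, by simpa, by simpa, rfl⟩
    | zero => exact ⟨0, 0, by simp, by simp, by simp⟩
    | add x y _ _ hx hy =>
      obtain ⟨k, t, hLt, htU, rfl⟩ := hx
      obtain ⟨k', t', hLt', ht'U, rfl⟩ := hy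
      refine ⟨k + k', t + t', ?_, ?_, by ring⟩ <;> rw [add_mul] <;> omega
  · rintro ⟨k, t, hLt, htU, rfl⟩
    induction k generalizing t with
    | zero => simp_all
    | succ k ih =>
      rw [add_one_mul] at hLt htU
      have hLU : L ≤ U := by
        by_contra! h
        have := Nat.mul_le_mul_left k h.le
        omega
      have := Nat.mul_le_mul_left k hLU
      obtain ⟨s, t', rfl, hLs, hsU, hLt', ht'U⟩ :
          ∃ s t', t = s + t' ∧ L ≤ s ∧ s ≤ U ∧ k * L ≤ t' ∧ t' ≤ k * U :=
        ⟨max L (t - k * U), t - max L (t - k * U), by omega, by omega, by omega, by omega,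
          by omega⟩
      rw [show (s + t') * d + (k + 1) = (s * d + 1) + (t' * d + k) by ring]
      exact add_mem (AddSubmonoid.subset_closure ⟨s, hLs, hsU, rfl⟩) (ih t' hLt' ht'U)

theorem not_gap_of_eq_mul_add {d k t q r : ℕ} (hkt : k ≤ t) (htk : t ≤ k * (d + 1))
    (hqr : q < r) (hrd : r ≤ d) (h : t * d + k = q * d + r) : False := by
  rcases le_or_gt t q with htq | hqt
  · have := Nat.mul_le_mul_right d htq
    omega
  · have := Nat.mul_le_mul_right d (Nat.succ_le_of_lt hqt)
    rw [Nat.succ_mul] at this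
    obtain rfl : k = 0 := by omega
    omega

theorem exists_eq_mul_add_or_gap {d : ℕ} (hd : 1 ≤ d) (m : ℕ) :
    (∃ k t, k ≤ t ∧ t ≤ k * (d + 1) ∧ m = t * d + k) ∨
      ∃ q r, q < r ∧ r ≤ d ∧ m = q * d + r := by
  rcases Nat.eq_zero_or_pos m with rfl | hm
  · exact Or.inl ⟨0, 0, by simp⟩
  obtain ⟨q, r, hr, hrd, rfl⟩ : ∃ q r, 1 ≤ r ∧ r ≤ d ∧ m = q * d + r := by
    refine ⟨(m - 1) / d, (m - 1) % d + 1, by omega, Nat.mod_lt _ hd, ?_⟩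
    have := Nat.div_add_mod' (m - 1) d
    omega
  rcases lt_or_ge q r with hqr | hrq
  · exact Or.inr ⟨q, r, hqr, hrd, rfl⟩
  obtain ⟨c, e, hed, rfl⟩ : ∃ c e, e ≤ d ∧ q = r + c * (d + 1) + e :=
    ⟨(q - r) / (d + 1), (q - r) % (d + 1), Nat.lt_succ_iff.mp (Nat.mod_lt _ d.succ_pos),
      by have := Nat.div_add_mod' (q - r) (d + 1); omega⟩
  refine Or.inl ⟨r + c * d, r + c * d + e, by omega, ?_, by ring⟩
  have := Nat.le_mul_of_pos_left d (show 0 < r + c * d by omega)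
  rw [mul_add_one]
  omega

theorem exists_eq_mul_add_iff_not_gap {d : ℕ} (hd : 1 ≤ d) (m : ℕ) :
    (∃ k t, k ≤ t ∧ t ≤ k * (d + 1) ∧ m = t * d + k) ↔
      ¬∃ q r, q < r ∧ r ≤ d ∧ m = q * d + r := by
  constructor
  · rintro ⟨k, t, hkt, htk, rfl⟩ ⟨q, r, hqr, hrd, h⟩
    exact not_gap_of_eq_mul_add hkt htk hqr hrd h
  · exact (exists_eq_mul_add_or_gap hd m).resolve_right

theorem setOf_exists_int_mul_add_one (d : ℕ) :
    {m : ℕ | ∃ s : ℤ, 1 ≤ s ∧ s ≤ d + 1 ∧ (m : ℤ) = s * d + 1} =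
      {m : ℕ | ∃ s : ℕ, 1 ≤ s ∧ s ≤ d + 1 ∧ m = s * d + 1} := by
  ext m
  constructor
  · rintro ⟨s, hs, hsd, hm⟩
    lift s to ℕ using by omega
    exact ⟨s, by omega, by omega, by exact_mod_cast hm⟩
  · rintro ⟨s, hs, hsd, rfl⟩
    exact ⟨s, by exact_mod_cast hs, by exact_mod_cast hsd, by push_cast; ring⟩

theorem exists_int_gap_iff_exists_nat (d m : ℕ) :
    (∃ i j : ℤ, 1 ≤ i ∧ i ≤ j ∧ j ≤ d ∧ (m : ℤ) = (i - 1) * d + j) ↔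
      ∃ q r : ℕ, q < r ∧ r ≤ d ∧ m = q * d + r := by
  constructor
  · rintro ⟨i, j, hi, hij, hjd, hm⟩
    lift j to ℕ using by omega
    obtain ⟨q, rfl⟩ : ∃ q : ℕ, i = q + 1 := ⟨(i - 1).toNat, by omega⟩
    have hm' : (m : ℤ) = q * d + j := by rw [hm]; ring
    exact ⟨q, j, by omega, by omega, by exact_mod_cast hm'⟩
  · rintro ⟨q, r, hqr, hrd, rfl⟩
    exact ⟨q + 1, r, by omega, by omega, by exact_mod_cast hrd, by push_cast; ring⟩

/-- For `n ≥ 3` and `S = {s(n-1)+1 : 1 ≤ s ≤ n}`, the complement in `ℕ` of the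
additive submonoid generated by `S` is `{(i-1)(n-1)+j : 1 ≤ i ≤ j ≤ n-1}`. -/
theorem stmt_1 (n : ℕ) (hn : 3 ≤ n) :
    (AddSubmonoid.closure
        {m : ℕ | ∃ s : ℤ, 1 ≤ s ∧ s ≤ (n : ℤ) ∧ (m : ℤ) = s * ((n : ℤ) - 1) + 1} :
      Set ℕ)ᶜ
      = {m : ℕ | ∃ i j : ℤ, 1 ≤ i ∧ i ≤ j ∧ j ≤ (n : ℤ) - 1 ∧
          (m : ℤ) = (i - 1) * ((n : ℤ) - 1) + j} := by
  obtain ⟨d, rfl⟩ : ∃ d, n = d + 1 := ⟨n - 1, by omega⟩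
  ext m
  push_cast
  simp only [add_sub_cancel_right, setOf_exists_int_mul_add_one, Set.mem_compl_iff, SetLike.mem_coe,
    mem_closure_mul_add_one_iff, mul_one, Set.mem_ofPred_eq, exists_int_gap_iff_exists_nat]
  rw [exists_eq_mul_add_iff_not_gap (by omega), not_not]
end

section
/- Let n ≥ 3 be an integer, let S = {s(n−1)+1 : s ∈ ℤ, 1 ≤ s ≤ n} ⊆ ℕ, and let ⟨S⟩ be the additive submonoid of ℕ generated by S. Then the complement ℕ \ ⟨S⟩ is finite and has exactly n(n−1)/2 elements. -/
/-!
Put `d = n - 1`. A sum of `k` generators `s * d + 1` is `t * d + k` with `k ≤ t ≤ k * (d + 1)`,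
and every such number is one. Writing `m = j * d + r + 1` with `r < d`, this representation
exists exactly when `r < j`: for `j ≤ r` any candidate overshoots or undershoots by a multiple
of `d`, while for `r < j` one takes `k = r + 1 + l * d` with `l = (j - r - 1) / (d + 1)`.
So the gaps are the `j * d + r + 1` with `j ≤ r < d`, and there are `1 + 2 + ⋯ + d` of them.
-/

open Finset

theorem mem_closure_setOf_mul_add_iff {a b c d m : ℕ} :
    m ∈ AddSubmonoid.closure {x : ℕ | ∃ s, a ≤ s ∧ s ≤ b ∧ x = s * d + c} ↔
      ∃ k t, k * a ≤ t ∧ t ≤ k * b ∧ m = t * d + k * c := by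
  constructor
  · intro hm
    induction hm using AddSubmonoid.closure_induction with
    | mem x hx =>
      obtain ⟨s, has, hsb, rfl⟩ := hx
      exact ⟨1, s, by simpa, by simpa, by ring⟩
    | zero => exact ⟨0, 0, by simp, by simp, by simp⟩
    | add x y _ _ hx hy =>
      obtain ⟨k, t, hkt, htk, rfl⟩ := hx
      obtain ⟨k', t', hkt', htk', rfl⟩ := hy
      exact ⟨k + k', t + t', by rw [add_mul]; omega, by rw [add_mul]; omega, by ring⟩
  · rintro ⟨k, t, hkt, htk, rfl⟩
    induction k generalizing t with
    | zero =>
      obtain rfl : t = 0 := by simpa using htk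
      simp
    | succ k ih =>
      rw [add_one_mul] at hkt htk
      have hab : a ≤ b := by
        by_contra! hba
        have := Nat.mul_le_mul_left k hba.le
        omega
      have hkab := Nat.mul_le_mul_left k hab
      obtain ⟨s, u, has, hsb, hau, hub, rfl⟩ :
          ∃ s u, a ≤ s ∧ s ≤ b ∧ k * a ≤ u ∧ u ≤ k * b ∧ t = s + u :=
        ⟨max a (t - k * b), t - max a (t - k * b), by omega, by omega, by omega, by omega, by omega⟩
      have hgen : s * d + c ∈ AddSubmonoid.closure {x : ℕ | ∃ s, a ≤ s ∧ s ≤ b ∧ x = s * d + c} :=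
        AddSubmonoid.subset_closure ⟨s, has, hsb, rfl⟩
      convert add_mem hgen (ih u hau hub) using 1
      ring

theorem setOf_int_generators_eq (d : ℕ) :
    {m : ℕ | ∃ s : ℤ, 1 ≤ s ∧ s ≤ ((d + 1 : ℕ) : ℤ) ∧
        (m : ℤ) = s * (((d + 1 : ℕ) : ℤ) - 1) + 1} =
      {m : ℕ | ∃ s, 1 ≤ s ∧ s ≤ d + 1 ∧ m = s * d + 1} := by
  ext m
  constructor
  · rintro ⟨s, h1, h2, h3⟩
    lift s to ℕ using by omega
    refine ⟨s, by omega, by omega, ?_⟩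
    exact_mod_cast (show (m : ℤ) = s * d + 1 by rw [h3]; push_cast; ring)
  · rintro ⟨s, h1, h2, rfl⟩
    exact ⟨s, by exact_mod_cast h1, by exact_mod_cast h2, by push_cast; ring⟩

section Gaps

variable {d : ℕ}

theorem mem_closure_generators_iff {m : ℕ} :
    m ∈ AddSubmonoid.closure {x : ℕ | ∃ s, 1 ≤ s ∧ s ≤ d + 1 ∧ x = s * d + 1} ↔
      ∃ k t, k ≤ t ∧ t ≤ k * (d + 1) ∧ m = t * d + k := by
  simp only [mem_closure_setOf_mul_add_iff, mul_one]

theorem mul_add_succ_not_mem_closure {j r : ℕ} (hjr : j ≤ r) (hrd : r < d) :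
    j * d + r + 1 ∉ AddSubmonoid.closure {x : ℕ | ∃ s, 1 ≤ s ∧ s ≤ d + 1 ∧ x = s * d + 1} := by
  rw [mem_closure_generators_iff]
  rintro ⟨k, t, hkt, htk, heq⟩
  rcases le_or_gt t j with htj | hjt
  · -- `k = (j - t) * d + r + 1 > j ≥ t`
    have : t * d + (j - t) * d = j * d := by rw [← add_mul]; congr 1; omega
    omega
  · -- `t * d ≥ (j + 1) * d > j * d + r`, and `k > 0` as `k = 0` forces `t = 0`
    have hk : k ≠ 0 := by rintro rfl; rw [zero_mul] at htk; omega
    have : (j + 1) * d ≤ t * d := Nat.mul_le_mul_right d hjt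
    rw [add_one_mul] at this
    omega

theorem mul_add_succ_mem_closure {j r : ℕ} (hrj : r < j) :
    j * d + r + 1 ∈ AddSubmonoid.closure {x : ℕ | ∃ s, 1 ≤ s ∧ s ≤ d + 1 ∧ x = s * d + 1} := by
  rw [mem_closure_generators_iff]
  set l := (j - r - 1) / (d + 1)
  have hl : l * (d + 1) ≤ j - r - 1 := Nat.div_mul_le_self _ _
  have hl' : j - r - 1 < (l + 1) * (d + 1) :=
    Nat.lt_mul_of_div_lt (Nat.lt_succ_self l) (Nat.succ_pos d)
  have hld : l * (d + 1) = l * d + l := by ring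
  refine ⟨r + 1 + l * d, j - l, ?_, ?_, ?_⟩
  · omega
  · have : l * d ≤ l * d * (d + 1) := Nat.le_mul_of_pos_right _ (Nat.succ_pos d)
    have : (r + 1 + l * d) * (d + 1) = r * d + r + d + 1 + l * d * (d + 1) := by ring
    rw [add_one_mul] at hl'
    omega
  · have : (j - l) * d + l * d = j * d := by rw [← add_mul]; congr 1; omega
    omega

def gaps (d : ℕ) : Finset ℕ :=
  ((range d).sigma fun r => range (r + 1)).image fun p => p.2 * d + p.1 + 1

theorem mem_gaps_iff {m : ℕ} : m ∈ gaps d ↔ ∃ r j, r < d ∧ j ≤ r ∧ m = j * d + r + 1 := by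
  simp only [gaps, mem_image, mem_sigma, mem_range, Sigma.exists, Nat.lt_succ_iff]
  constructor
  · rintro ⟨r, j, ⟨hrd, hjr⟩, rfl⟩
    exact ⟨r, j, hrd, hjr, rfl⟩
  · rintro ⟨r, j, hrd, hjr, rfl⟩
    exact ⟨r, j, ⟨hrd, hjr⟩, rfl⟩

theorem compl_closure_generators (hd : 0 < d) :
    (AddSubmonoid.closure {x : ℕ | ∃ s, 1 ≤ s ∧ s ≤ d + 1 ∧ x = s * d + 1} : Set ℕ)ᶜ =
      gaps d := by
  ext m
  simp only [Set.mem_compl_iff, SetLike.mem_coe, mem_gaps_iff]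
  constructor
  · intro hm
    have hm0 : m ≠ 0 := fun h => hm (h ▸ zero_mem _)
    have hdiv : (m - 1) / d * d + (m - 1) % d + 1 = m := by
      have := Nat.div_add_mod' (m - 1) d
      omega
    refine ⟨(m - 1) % d, (m - 1) / d, Nat.mod_lt _ hd, ?_, hdiv.symm⟩
    by_contra! hrj
    exact hm (hdiv ▸ mul_add_succ_mem_closure hrj)
  · rintro ⟨r, j, hrd, hjr, rfl⟩
    exact mul_add_succ_not_mem_closure hjr hrd

theorem card_gaps (hd : 0 < d) : (gaps d).card = (d + 1) * d / 2 := by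
  have hinj : Set.InjOn (fun p : (_ : ℕ) × ℕ => p.2 * d + p.1 + 1)
      ((range d).sigma fun r => range (r + 1)) := by
    rintro ⟨r, j⟩ hp ⟨r', j'⟩ hp' heq
    simp only [coe_sigma, Set.mem_sigma_iff, mem_coe, mem_range] at hp hp' heq
    -- both sides are the division of `m - 1` by `d` with remainder
    have h := (Nat.div_mod_unique hd).2 ⟨(rfl : r + d * j = r + d * j), hp.1⟩
    have h' := (Nat.div_mod_unique hd).2 ⟨(rfl : r' + d * j' = r' + d * j'), hp'.1⟩
    rw [show r + d * j = r' + d * j' by linarith] at h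
    obtain ⟨rfl, rfl⟩ : j = j' ∧ r = r' := ⟨h.1.symm.trans h'.1, h.2.symm.trans h'.2⟩
    rfl
  rw [gaps, card_image_of_injOn hinj, card_sigma]
  simp only [card_range]
  rw [← add_zero (∑ x ∈ range d, (x + 1)), ← sum_range_succ' (fun i => i), sum_range_id,
    Nat.add_sub_cancel]

end Gaps

/-- For `n ≥ 3` and `S = {s(n-1)+1 : 1 ≤ s ≤ n}`, the complement in `ℕ` of the
additive submonoid generated by `S` is finite, with exactly `n(n-1)/2` elements. -/
theorem stmt_2 (n : ℕ) (hn : 3 ≤ n) :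
    ((AddSubmonoid.closure
        {m : ℕ | ∃ s : ℤ, 1 ≤ s ∧ s ≤ (n : ℤ) ∧ (m : ℤ) = s * ((n : ℤ) - 1) + 1} :
      Set ℕ)ᶜ).Finite ∧
    ((AddSubmonoid.closure
        {m : ℕ | ∃ s : ℤ, 1 ≤ s ∧ s ≤ (n : ℤ) ∧ (m : ℤ) = s * ((n : ℤ) - 1) + 1} :
      Set ℕ)ᶜ).ncard = n * (n - 1) / 2 := by
  obtain ⟨d, rfl⟩ : ∃ d, n = d + 1 := ⟨n - 1, by omega⟩
  have hd : 0 < d := by omega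
  rw [setOf_int_generators_eq, compl_closure_generators hd]
  exact ⟨finite_toSet _, by rw [Set.ncard_coe_finset, card_gaps hd, Nat.add_sub_cancel]⟩
end

section
/- Let n ≥ 3 be an integer, set g = n(n−1)/2, let G_n := {(i−1)(n−1)+j : i, j ∈ ℤ, 1 ≤ i ≤ j ≤ n−1}, and let β : G_n → G_n be the bijection sending (i−1)(n−1)+j (for 1 ≤ i ≤ j ≤ n−1) to (n−j−1)(n−1)+(n+i−j−1). Then the number of pairs (x, y) ∈ G_n × G_n with x < y and β(x) > β(y) equals (g−1)g/3. -/
/-!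
Write `m = n - 1` and index `G_n` by the staircase `1 ≤ i ≤ j ≤ m`. The row-major rank
`(i, j) ↦ (i - 1) m + j` is strictly monotone for the lexicographic order, so the inversions of `β`
are the index pairs `p <lex q` with `βᵢ q <lex βᵢ p`, where `βᵢ (i, j) = (m + 1 - j, m + i - j)`
is `β` read on indices. Unwinding both comparisons, this says exactly `p.1 ≤ q.1` and
`p.2 < q.2`. Fixing `(p.1, q.2) = (a, d)`, there are `(d - a)(d - a + 1)` such pairs, and summing
gives `(m - 1) m (m + 1) (m + 2) / 12 = (g - 1) g / 3`.
-/

open Finset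

theorem Nat.mul_add_lt_mul_add_iff {m i j b d : ℕ} (hb : 0 < b) (hbm : b ≤ m) (hd : 0 < d)
    (hdm : d ≤ m) : i * m + b < j * m + d ↔ i < j ∨ i = j ∧ b < d := by
  have key {i j b d : ℕ} (hd : 0 < d) (hb : b ≤ m) (h : i < j) : i * m + b < j * m + d :=
    calc i * m + b ≤ (i + 1) * m := by rw [add_one_mul]; omega
      _ ≤ j * m := Nat.mul_le_mul_right m h
      _ < j * m + d := by omega
  rcases lt_trichotomy i j with h | rfl | h
  · simp [key hd hbm h, h]
  · omega
  · have := key hb hdm h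
    omega

theorem Set.ncard_setOf_pairs_image {α β : Type*} {s : Finset α} {f : α → β}
    (hf : Set.InjOn f s) (r : β → β → Prop) [DecidableRel r] :
    {x : β × β | x.1 ∈ f '' s ∧ x.2 ∈ f '' s ∧ r x.1 x.2}.ncard =
      #{x ∈ s ×ˢ s | r (f x.1) (f x.2)} := by
  classical
  have : {x : β × β | x.1 ∈ f '' s ∧ x.2 ∈ f '' s ∧ r x.1 x.2} =
      ({x ∈ s ×ˢ s | r (f x.1) (f x.2)}.image fun x => (f x.1, f x.2) : Finset (β × β)) := by
    ext ⟨y, z⟩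
    simp only [Set.mem_ofPred_eq, Set.mem_image, coe_image, coe_filter, mem_product,
      Prod.exists, Prod.mk.injEq, mem_coe]
    constructor
    · rintro ⟨⟨a, ha, rfl⟩, ⟨b, hb, rfl⟩, h⟩
      exact ⟨a, b, ⟨⟨ha, hb⟩, h⟩, rfl, rfl⟩
    · rintro ⟨a, b, ⟨⟨ha, hb⟩, h⟩, rfl, rfl⟩
      exact ⟨⟨a, ha, rfl⟩, ⟨b, hb, rfl⟩, h⟩
  rw [this, Set.ncard_coe_finset, card_image_of_injOn]
  exact (hf.prodMap hf).mono fun x hx => by simp_all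

theorem three_mul_sum_Icc_sub_mul_sub (a m : ℕ) :
    3 * ∑ d ∈ Icc 1 m, (d - a) * (d + 1 - a) = (m - a) * (m + 1 - a) * (m + 2 - a) := by
  induction m with
  | zero => simp
  | succ m ih =>
    rw [sum_Icc_succ_top (by omega), Nat.mul_add, ih]
    rcases le_or_gt a m with h | h
    · obtain ⟨k, rfl⟩ := Nat.exists_eq_add_of_le h
      simp only [add_assoc, add_tsub_cancel_left]
      ring
    · simp [show m + 1 - a = 0 by omega]

theorem four_mul_sum_range_mul (N : ℕ) :
    4 * ∑ k ∈ range N, k * (k + 1) * (k + 2) = (N - 1) * N * (N + 1) * (N + 2) := by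
  induction N with
  | zero => simp
  | succ N ih =>
    rw [sum_range_succ, Nat.mul_add, ih]
    rcases N with _ | N
    · simp
    · simp only [add_tsub_cancel_right]
      ring

def upperTriangle (m : ℕ) : Finset (ℕ × ℕ) := {p ∈ Icc 1 m ×ˢ Icc 1 m | p.1 ≤ p.2}

theorem mem_upperTriangle {m : ℕ} {p : ℕ × ℕ} :
    p ∈ upperTriangle m ↔ 1 ≤ p.1 ∧ p.1 ≤ p.2 ∧ p.2 ≤ m := by
  simp only [upperTriangle, mem_filter, mem_product, mem_Icc]
  omega

def rowMajor (m : ℕ) (p : ℕ × ℕ) : ℕ := (p.1 - 1) * m + p.2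

theorem rowMajor_lt_rowMajor_iff {m : ℕ} {p q : ℕ × ℕ} (hp : p ∈ upperTriangle m)
    (hq : q ∈ upperTriangle m) :
    rowMajor m p < rowMajor m q ↔ p.1 < q.1 ∨ p.1 = q.1 ∧ p.2 < q.2 := by
  rw [mem_upperTriangle] at hp hq
  rw [rowMajor, rowMajor, Nat.mul_add_lt_mul_add_iff (by omega) hp.2.2 (by omega) hq.2.2]
  omega

theorem rowMajor_injOn (m : ℕ) : Set.InjOn (rowMajor m) (upperTriangle m) := by
  intro p hp q hq h
  have := (rowMajor_lt_rowMajor_iff hp hq).not.mp h.not_lt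
  have := (rowMajor_lt_rowMajor_iff hq hp).not.mp h.not_gt
  exact Prod.ext (by omega) (by omega)

theorem natCast_rowMajor {m : ℕ} {p : ℕ × ℕ} (hp : 1 ≤ p.1) :
    (rowMajor m p : ℤ) = (p.1 - 1) * m + p.2 := by
  push_cast [rowMajor, Nat.cast_sub hp]
  rfl

theorem image_rowMajor_upperTriangle (m : ℕ) :
    rowMajor m '' upperTriangle m =
      {x : ℕ | ∃ i j : ℤ, 1 ≤ i ∧ i ≤ j ∧ j ≤ m ∧ (x : ℤ) = (i - 1) * m + j} := by
  ext x
  simp only [Set.mem_image, mem_coe, mem_upperTriangle, Set.mem_ofPred_eq, Prod.exists]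
  constructor
  · rintro ⟨a, b, h, rfl⟩
    exact ⟨a, b, by omega, by omega, by omega, natCast_rowMajor (p := (a, b)) h.1⟩
  · rintro ⟨i, j, hi, hij, hj, hx⟩
    refine ⟨i.toNat, j.toNat, by omega, Nat.cast_injective (R := ℤ) ?_⟩
    rw [natCast_rowMajor (by dsimp only; omega), hx, Int.toNat_of_nonneg (by omega),
      Int.toNat_of_nonneg (by omega)]

def betaIndex (m : ℕ) (p : ℕ × ℕ) : ℕ × ℕ := (m + 1 - p.2, m + p.1 - p.2)

theorem betaIndex_mem_upperTriangle {m : ℕ} {p : ℕ × ℕ} (hp : p ∈ upperTriangle m) :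
    betaIndex m p ∈ upperTriangle m := by
  rw [mem_upperTriangle] at hp ⊢
  simp only [betaIndex]
  omega

theorem natCast_rowMajor_betaIndex {m : ℕ} {p : ℕ × ℕ} (hp : p ∈ upperTriangle m) :
    (rowMajor m (betaIndex m p) : ℤ) = (m - p.2) * m + (m + p.1 - p.2) := by
  rw [natCast_rowMajor (mem_upperTriangle.mp (betaIndex_mem_upperTriangle hp)).1]
  rw [mem_upperTriangle] at hp
  simp only [betaIndex]
  push_cast [Nat.cast_sub (by omega : p.2 ≤ m + 1), Nat.cast_sub (by omega : p.2 ≤ m + p.1)]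
  ring

theorem isInversion_iff {m : ℕ} {p q : ℕ × ℕ} (hp : p ∈ upperTriangle m)
    (hq : q ∈ upperTriangle m) :
    rowMajor m p < rowMajor m q ∧ rowMajor m (betaIndex m q) < rowMajor m (betaIndex m p) ↔
      p.1 ≤ q.1 ∧ p.2 < q.2 := by
  rw [rowMajor_lt_rowMajor_iff hp hq, rowMajor_lt_rowMajor_iff
    (betaIndex_mem_upperTriangle hq) (betaIndex_mem_upperTriangle hp)]
  rw [mem_upperTriangle] at hp hq
  simp only [betaIndex]
  omega

def inversionPairs (m : ℕ) : Finset ((ℕ × ℕ) × (ℕ × ℕ)) :=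
  {x ∈ upperTriangle m ×ˢ upperTriangle m | x.1.1 ≤ x.2.1 ∧ x.1.2 < x.2.2}

theorem card_inversionPairs_fiber {m a d : ℕ} (ha : 1 ≤ a) (hd : d ≤ m) :
    #{x ∈ inversionPairs m | (x.1.1, x.2.2) = (a, d)} = (d - a) * (d + 1 - a) := by
  have hfiber : {x ∈ inversionPairs m | (x.1.1, x.2.2) = (a, d)} =
      (Ico a d ×ˢ Icc a d).image fun bc => ((a, bc.1), (bc.2, d)) := by
    ext ⟨⟨a', b⟩, ⟨c, d'⟩⟩
    simp only [inversionPairs, mem_filter, mem_product, mem_upperTriangle, mem_image, mem_Ico,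
      mem_Icc, Prod.exists, Prod.mk.injEq]
    constructor
    · rintro ⟨⟨⟨hp, hq⟩, h⟩, rfl, rfl⟩
      exact ⟨b, c, by omega⟩
    · rintro ⟨b, c, h, ⟨rfl, rfl⟩, rfl, rfl⟩
      omega
  rw [hfiber, card_image_of_injective _ fun _ _ h => by simp_all [Prod.ext_iff],
    card_product, Nat.card_Ico, Nat.card_Icc]

theorem twelve_mul_card_inversionPairs (m : ℕ) :
    12 * #(inversionPairs m) = (m - 1) * m * (m + 1) * (m + 2) := by
  have hmaps : ∀ x ∈ inversionPairs m, (x.1.1, x.2.2) ∈ Icc 1 m ×ˢ Icc 1 m := by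
    intro x hx
    simp only [inversionPairs, mem_filter, mem_product, mem_upperTriangle, mem_Icc] at hx ⊢
    omega
  rw [card_eq_sum_card_fiberwise hmaps, sum_product]
  calc 12 * ∑ a ∈ Icc 1 m, ∑ d ∈ Icc 1 m, #{x ∈ inversionPairs m | (x.1.1, x.2.2) = (a, d)}
      = 4 * ∑ a ∈ Icc 1 m, 3 * ∑ d ∈ Icc 1 m, (d - a) * (d + 1 - a) := by
        rw [← mul_sum, ← mul_assoc]
        refine congrArg _ (sum_congr rfl fun a ha => sum_congr rfl fun d hd => ?_)
        rw [mem_Icc] at ha hd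
        exact card_inversionPairs_fiber ha.1 hd.2
    _ = 4 * ∑ k ∈ range m, k * (k + 1) * (k + 2) := by
        congr 1
        refine sum_nbij' (m - ·) (m - ·) ?_ ?_ ?_ ?_ fun a ha => ?_
        any_goals (intro a ha; simp only [mem_Icc, mem_range] at ha ⊢; omega)
        rw [mem_Icc] at ha
        rw [three_mul_sum_Icc_sub_mul_sub]
        simp only [show ∀ i, m + i - a = m - a + i from fun i => by omega]
    _ = (m - 1) * m * (m + 1) * (m + 2) := four_mul_sum_range_mul m

theorem card_inversionPairs (m : ℕ) :
    #(inversionPairs m) = ((m + 1) * m / 2 - 1) * ((m + 1) * m / 2) / 3 := by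
  have h := twelve_mul_card_inversionPairs m
  obtain ⟨g, hg⟩ := Nat.even_mul_succ_self m
  rw [Nat.mul_comm (m + 1), hg, ← two_mul, Nat.mul_div_cancel_left _ two_pos]
  rcases m with _ | m
  · obtain rfl : g = 0 := by omega
    simpa using h
  obtain ⟨g, rfl⟩ := Nat.exists_eq_add_one.mpr (by nlinarith : 0 < g)
  simp only [add_tsub_cancel_right] at h ⊢
  refine (Nat.div_eq_of_eq_mul_left three_pos ?_).symm
  nlinarith

/-- For the bijection `β` of `G_n = {(i-1)(n-1)+j : 1 ≤ i ≤ j ≤ n-1}` sending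
`(i-1)(n-1)+j` to `(n-j-1)(n-1)+(n+i-j-1)`, the number of pairs `(x,y) ∈ G_n × G_n`
with `x < y` and `β x > β y` is `(g-1)g/3`, where `g = n(n-1)/2`. -/
theorem stmt_8 (n : ℕ) (hn : 3 ≤ n) (g : ℕ) (hg : g = n * (n - 1) / 2) (G : Set ℕ)
    (hG : G = {m : ℕ | ∃ i j : ℤ, 1 ≤ i ∧ i ≤ j ∧ j ≤ (n : ℤ) - 1 ∧
      (m : ℤ) = (i - 1) * ((n : ℤ) - 1) + j})
    (β : ℕ → ℕ)
    (hβ : ∀ (m : ℕ) (i j : ℤ), 1 ≤ i → i ≤ j → j ≤ (n : ℤ) - 1 →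
      (m : ℤ) = (i - 1) * ((n : ℤ) - 1) + j →
      (β m : ℤ) = ((n : ℤ) - j - 1) * ((n : ℤ) - 1) + ((n : ℤ) + i - j - 1)) :
    {p : ℕ × ℕ | p.1 ∈ G ∧ p.2 ∈ G ∧ p.1 < p.2 ∧ β p.2 < β p.1}.ncard
      = (g - 1) * g / 3 := by
  obtain ⟨m, rfl⟩ : ∃ m, n = m + 1 := ⟨n - 1, by omega⟩
  push_cast at hG hβ
  simp only [add_sub_cancel_right] at hG hβ
  have hβm (p : ℕ × ℕ) (hp : p ∈ upperTriangle m) :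
      β (rowMajor m p) = rowMajor m (betaIndex m p) := by
    have h := mem_upperTriangle.mp hp
    zify
    rw [hβ _ p.1 p.2 (by omega) (by omega) (by omega) (natCast_rowMajor h.1),
      natCast_rowMajor_betaIndex hp]
    ring
  rw [hG, ← image_rowMajor_upperTriangle, hg, add_tsub_cancel_right, ← card_inversionPairs,
    Set.ncard_setOf_pairs_image (rowMajor_injOn m) fun x y => x < y ∧ β y < β x, inversionPairs]
  refine congrArg _ (filter_congr fun x hx => ?_)
  rw [mem_product] at hx
  rw [hβm _ hx.1, hβm _ hx.2, isInversion_iff hx.1 hx.2]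
end

section
/- Let n ≥ 3 be an integer. For integers i, j ≥ 1 with i+j ≤ n−1, define the rectangle S_{ij} := {(a,b) ∈ ℤ² : (i−1)n+1 ≤ a ≤ in−(i+j) and (j−1)n+i ≤ b ≤ jn−j}. Then: (1) for distinct pairs (i,j) ≠ (I,J) with i,j,I,J ≥ 1, i+j ≤ n−1 and I+J ≤ n−1, the sets S_{ij} and S_{IJ} are disjoint; and (2) each S_{ij} has exactly (n−d)(n−d+1) elements, where d = i+j. -/
/-- For `i, j ≥ 1` with `i+j ≤ n-1`, let
`S i j = {(a,b) : (i-1)n+1 ≤ a ≤ in-(i+j), (j-1)n+i ≤ b ≤ jn-j}`.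
Then the `S i j` are pairwise disjoint, and `S i j` has `(n-d)(n-d+1)` elements,
where `d = i+j`. -/
theorem stmt_10 (n : ℤ) (hn : 3 ≤ n) (S : ℤ → ℤ → Set (ℤ × ℤ))
    (hS : ∀ i j : ℤ, S i j = {p : ℤ × ℤ |
      ((i - 1) * n + 1 ≤ p.1 ∧ p.1 ≤ i * n - (i + j)) ∧
      ((j - 1) * n + i ≤ p.2 ∧ p.2 ≤ j * n - j)}) :
    (∀ i j I J : ℤ, 1 ≤ i → 1 ≤ j → i + j ≤ n - 1 → 1 ≤ I → 1 ≤ J → I + J ≤ n - 1 →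
      (i, j) ≠ (I, J) → Disjoint (S i j) (S I J)) ∧
    (∀ i j : ℤ, 1 ≤ i → 1 ≤ j → i + j ≤ n - 1 →
      ((S i j).ncard : ℤ) = (n - (i + j)) * (n - (i + j) + 1)) := by
  have hn0 : (0:ℤ) ≤ n := by linarith
  constructor
  · intro i j I J hi hj hij hI hJ hIJ hne
    rw [Set.disjoint_left]
    intro p hp hp'
    rw [hS] at hp hp'
    obtain ⟨⟨h1, h2⟩, h3, h4⟩ := hp
    obtain ⟨⟨h1', h2'⟩, h3', h4'⟩ := hp'
    rcases lt_trichotomy i I with h | h | h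
    · have : (i:ℤ) ≤ I - 1 := by linarith
      nlinarith [mul_le_mul_of_nonneg_right this hn0]
    · subst h
      rcases lt_trichotomy j J with h | h | h
      · have : (j:ℤ) ≤ J - 1 := by linarith
        nlinarith [mul_le_mul_of_nonneg_right this hn0]
      · exact hne (by rw [h])
      · have : (J:ℤ) ≤ j - 1 := by linarith
        nlinarith [mul_le_mul_of_nonneg_right this hn0]
    · have : (I:ℤ) ≤ i - 1 := by linarith
      nlinarith [mul_le_mul_of_nonneg_right this hn0]
  · intro i j hi hj hij
    have hset : S i j = ↑((Finset.Icc ((i-1)*n+1) (i*n-(i+j))) ×ˢ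
        (Finset.Icc ((j-1)*n+i) (j*n-j))) := by
      rw [hS]
      ext p
      simp [Finset.mem_product, Prod.le_def]
      tauto
    rw [hset, Set.ncard_coe_finset, Finset.card_product, Int.card_Icc, Int.card_Icc]
    have e1 : i*n-(i+j) + 1 - ((i-1)*n+1) = n - (i+j) := by ring
    have e2 : j*n-j + 1 - ((j-1)*n+i) = n - (i+j) + 1 := by ring
    rw [e1, e2]
    have p1 : (0:ℤ) ≤ n - (i+j) := by linarith
    have p2 : (0:ℤ) ≤ n - (i+j) + 1 := by linarith
    push_cast
    rw [Int.toNat_of_nonneg p1, Int.toNat_of_nonneg p2]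
end

section
/- Let n ≥ 3 be an integer and set g = n(n−1)/2. Then the set {((i−1)n+r+1, (j−1)n+i+s) ∈ ℤ² : i, j, r, s ∈ ℤ, i ≥ 1, j ≥ 1, i+j ≤ n−1, 0 ≤ r ≤ n−(i+j)−1, 0 ≤ s ≤ n−(i+j)} has exactly (g−1)g/3 elements, i.e. (n−2)(n−1)n(n+1)/12 elements. -/
open Finset

private lemma sum3' (m : ℕ) : 3 * ∑ t ∈ range m, (t+1)*(t+2) = m*(m+1)*(m+2) := by
  induction m with
  | zero => simp
  | succ k ih => rw [sum_range_succ, mul_add, ih]; ring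

private lemma sum4' (m : ℕ) : 4 * ∑ t ∈ range m, (t+1)*(t+2)*(t+3) = m*(m+1)*(m+2)*(m+3) := by
  induction m with
  | zero => simp
  | succ k ih => rw [sum_range_succ, mul_add, ih]; ring

private lemma refl3' (m : ℕ) : ∑ j ∈ range m, (m-j)*(m+1-j) = ∑ t ∈ range m, (t+1)*(t+2) := by
  rw [← Finset.sum_range_reflect (fun t => (t+1)*(t+2)) m]
  apply Finset.sum_congr rfl
  intro j hj
  simp only [mem_range] at hj
  congr 1 <;> omega

private lemma refl4' (m : ℕ) :
    ∑ j ∈ range m, (m-j)*(m+1-j)*(m+2-j) = ∑ t ∈ range m, (t+1)*(t+2)*(t+3) := by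
  rw [← Finset.sum_range_reflect (fun t => (t+1)*(t+2)*(t+3)) m]
  apply Finset.sum_congr rfl
  intro j hj
  simp only [mem_range] at hj
  congr 1
  · congr 1 <;> omega
  · omega

private lemma div_uniq {n q1 r1 q2 r2 : ℤ} (h1 : 0 ≤ r1) (h2 : r1 < n) (h3 : 0 ≤ r2)
    (h4 : r2 < n) (he : q1*n+r1 = q2*n+r2) : q1 = q2 ∧ r1 = r2 := by
  have hn : 0 < n := lt_of_le_of_lt h1 h2
  have hq : q1 = q2 := by
    rcases lt_trichotomy q1 q2 with h|h|h
    · exfalso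
      nlinarith [mul_nonneg (by omega : (0:ℤ) ≤ q2 - q1 - 1) hn.le]
    · exact h
    · exfalso
      nlinarith [mul_nonneg (by omega : (0:ℤ) ≤ q1 - q2 - 1) hn.le]
  refine ⟨hq, by subst hq; linarith⟩

private def pf (n : ℤ) : (Σ _ : ℕ, Σ _ : ℕ, ℕ × ℕ) → ℤ × ℤ :=
  fun x => ((x.1 : ℤ) * n + (x.2.2.1 : ℤ) + 1,
            (x.2.1 : ℤ) * n + (x.1 : ℤ) + 1 + (x.2.2.2 : ℤ))

private def pS (N : ℕ) : Finset (Σ _ : ℕ, Σ _ : ℕ, ℕ × ℕ) :=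
  (range (N-2)).sigma (fun i0 => (range (N-2-i0)).sigma
    (fun j0 => range (N-2-i0-j0) ×ˢ range (N-1-i0-j0)))

private lemma pmem (N : ℕ) (i0 j0 r0 s0 : ℕ) :
    (⟨i0, j0, (r0, s0)⟩ : Σ _ : ℕ, Σ _ : ℕ, ℕ × ℕ) ∈ pS N ↔
      i0 < N-2 ∧ j0 < N-2-i0 ∧ r0 < N-2-i0-j0 ∧ s0 < N-1-i0-j0 := by
  simp [pS, Finset.mem_sigma, Finset.mem_product, and_assoc]

private lemma pcard (N : ℕ) (hN : 3 ≤ N) : 12 * (pS N).card = (N-2)*(N-1)*N*(N+1) := by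
  have h1 : (pS N).card
      = ∑ i0 ∈ range (N-2), ∑ j0 ∈ range (N-2-i0), (N-2-i0-j0)*(N-1-i0-j0) := by
    simp [pS, Finset.card_sigma, Finset.card_product]
  have h2 : ∀ i0 ∈ range (N-2),
      3 * ∑ j0 ∈ range (N-2-i0), (N-2-i0-j0)*(N-1-i0-j0) = (N-2-i0)*(N-1-i0)*(N-i0) := by
    intro i0 hi0
    simp only [mem_range] at hi0
    have hre : ∑ j0 ∈ range (N-2-i0), (N-2-i0-j0)*(N-1-i0-j0)
        = ∑ j0 ∈ range (N-2-i0), ((N-2-i0)-j0)*((N-2-i0)+1-j0) := by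
      apply Finset.sum_congr rfl
      intro j hj
      simp only [mem_range] at hj
      congr 1 <;> omega
    rw [hre, refl3' (N-2-i0), sum3' (N-2-i0),
      show N-2-i0+1 = N-1-i0 by omega, show N-2-i0+2 = N-i0 by omega]
  have h3 : 3 * (pS N).card = ∑ i0 ∈ range (N-2), (N-2-i0)*(N-1-i0)*(N-i0) := by
    rw [h1, Finset.mul_sum]
    exact Finset.sum_congr rfl h2
  have h4 : ∑ i0 ∈ range (N-2), (N-2-i0)*(N-1-i0)*(N-i0)
      = ∑ i0 ∈ range (N-2), ((N-2)-i0)*((N-2)+1-i0)*((N-2)+2-i0) := by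
    apply Finset.sum_congr rfl
    intro j hj
    simp only [mem_range] at hj
    congr 1
    · congr 1 <;> omega
    · omega
  have h5 : 12 * (pS N).card = 4 * ∑ t ∈ range (N-2), (t+1)*(t+2)*(t+3) := by
    rw [show 12 * (pS N).card = 4 * (3 * (pS N).card) by ring, h3, h4, refl4' (N-2)]
  rw [h5, sum4' (N-2), show N-2+1 = N-1 by omega, show N-2+2 = N by omega,
    show N-2+3 = N+1 by omega]

/-- The set `{((i-1)n+r+1, (j-1)n+i+s) : i,j ≥ 1, i+j ≤ n-1, 0 ≤ r ≤ n-(i+j)-1,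
0 ≤ s ≤ n-(i+j)}` has exactly `(g-1)g/3 = (n-2)(n-1)n(n+1)/12` elements,
where `g = n(n-1)/2`. -/
theorem stmt_12 (n : ℤ) (hn : 3 ≤ n) (g : ℤ) (hg : g = n * (n - 1) / 2)
    (T : Set (ℤ × ℤ))
    (hT : T = {p : ℤ × ℤ | ∃ i j r s : ℤ, 1 ≤ i ∧ 1 ≤ j ∧ i + j ≤ n - 1 ∧
      0 ≤ r ∧ r ≤ n - (i + j) - 1 ∧ 0 ≤ s ∧ s ≤ n - (i + j) ∧
      p = ((i - 1) * n + r + 1, (j - 1) * n + i + s)}) :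
    (T.ncard : ℤ) = (g - 1) * g / 3 ∧
    (T.ncard : ℤ) = (n - 2) * (n - 1) * n * (n + 1) / 12 := by
  have hn0 : 0 < n := by omega
  set N := n.toNat with hNdef
  have hNn : (N:ℤ) = n := Int.toNat_of_nonneg hn0.le
  have hN3 : 3 ≤ N := by omega
  have hTS : T = ↑((pS N).image (pf n)) := by
    ext p
    simp only [hT, Set.mem_setOf_eq, Finset.coe_image, Set.mem_image, Finset.mem_coe]
    constructor
    · rintro ⟨i, j, r, s, hi, hj, hij, hr0, hr1, hs0, hs1, hp⟩
      refine ⟨⟨(i-1).toNat, (j-1).toNat, (r.toNat, s.toNat)⟩, ?_, ?_⟩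
      · rw [pmem]
        refine ⟨by omega, by omega, by omega, by omega⟩
      · rw [hp]
        unfold pf
        have e1 : (((i-1).toNat : ℕ) : ℤ) = i - 1 := by omega
        have e2 : (((j-1).toNat : ℕ) : ℤ) = j - 1 := by omega
        have e3 : ((r.toNat : ℕ) : ℤ) = r := by omega
        have e4 : ((s.toNat : ℕ) : ℤ) = s := by omega
        simp only [Prod.ext_iff]
        constructor
        · rw [e1, e3]
        · rw [e2, e1, e4]; ring
    · rintro ⟨⟨i0, j0, r0, s0⟩, hx, rfl⟩
      rw [pmem] at hx
      obtain ⟨h1, h2, h3, h4⟩ := hx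
      refine ⟨(i0:ℤ)+1, (j0:ℤ)+1, (r0:ℤ), (s0:ℤ), by omega, by omega, by omega, by omega,
        by omega, by omega, by omega, ?_⟩
      unfold pf
      simp only [Prod.ext_iff]
      constructor <;> push_cast <;> ring
  have hinj : Set.InjOn (pf n) ↑(pS N) := by
    rintro ⟨i1, j1, r1, s1⟩ h1 ⟨i2, j2, r2, s2⟩ h2 heq
    rw [Finset.mem_coe, pmem] at h1 h2
    obtain ⟨a1, b1, c1, d1⟩ := h1
    obtain ⟨a2, b2, c2, d2⟩ := h2
    unfold pf at heq
    simp only [Prod.ext_iff] at heq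
    obtain ⟨he1, he2⟩ := heq
    have e1 : (i1:ℤ) * n + (r1:ℤ) = (i2:ℤ) * n + (r2:ℤ) := by
      linarith
    obtain ⟨hi, hr⟩ := div_uniq (by positivity) (by omega) (by positivity) (by omega) e1
    have hii : i1 = i2 := by omega
    have e2 : (j1:ℤ) * n + ((i1:ℤ) + 1 + (s1:ℤ)) = (j2:ℤ) * n + ((i2:ℤ) + 1 + (s2:ℤ)) := by
      linarith
    obtain ⟨hj, hs⟩ := div_uniq (by omega) (by omega) (by omega) (by omega) e2
    have hjj : j1 = j2 := by omega
    have hrr : r1 = r2 := by omega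
    have hss : s1 = s2 := by omega
    subst hii; subst hjj; subst hrr; subst hss
    rfl
  have hcard : T.ncard = (pS N).card := by
    rw [hTS, Set.ncard_coe_finset, Finset.card_image_of_injOn hinj]
  have hcZ : (12:ℤ) * (T.ncard : ℤ) = (n-2)*(n-1)*n*(n+1) := by
    have hc : ((12 * (pS N).card : ℕ) : ℤ) = (((N-2)*(N-1)*N*(N+1) : ℕ) : ℤ) := by
      exact_mod_cast congrArg (Nat.cast : ℕ → ℤ) (pcard N hN3)
    rw [hcard]
    push_cast [Nat.cast_sub (by omega : 2 ≤ N), Nat.cast_sub (by omega : 1 ≤ N)] at hc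
    rw [hNn] at hc
    linarith
  have h2g : 2 * g = n * (n - 1) := by
    have hdvd : (2:ℤ) ∣ n * (n - 1) := by
      have h0 := Int.even_mul_succ_self (n - 1)
      have h' : Even (n * (n - 1)) := by
        have he : (n-1) * (n-1+1) = n * (n-1) := by ring
        rwa [he] at h0
      exact h'.two_dvd
    rw [hg, Int.mul_ediv_cancel' hdvd]
  have h4g : 4 * ((g-1)*g) = (n-2)*(n-1)*n*(n+1) := by
    linear_combination (n*(n-1) + 2*g - 2) * h2g
  constructor
  · have h3c : 3 * (T.ncard : ℤ) = (g-1)*g := by linarith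
    rw [← h3c]
    exact (Int.mul_ediv_cancel_left _ (by norm_num)).symm
  · rw [← hcZ]
    exact (Int.mul_ediv_cancel_left _ (by norm_num)).symm
end

section
/- Let n ≥ 3 be an integer and let i, j, k ∈ {0, …, n−3}. Let a₀, b₀, c₀ be integers with 1 ≤ a₀ ≤ n−2−k, 1 ≤ b₀ ≤ n−2−i and 1 ≤ c₀ ≤ n−2−j, and set a = kn+a₀, b = in+b₀, c = jn+c₀. Assume the six inequalities: b < (n−a₀−k−1)(n−1)+n−a₀; a < (b₀−1)(n−1)+n−i−1; c < (n−b₀−i−1)(n−1)+n−b₀; b < (c₀−1)(n−1)+n−j−1; a < (n−c₀−j−1)(n−1)+n−c₀; and c < (a₀−1)(n−1)+n−k−1. Then, setting d = i+j+k, r = a₀−j−1, s = b₀−k−1 and t = c₀−i−1, one has r ≥ 0, s ≥ 0, t ≥ 0, d ≤ n−3, r ≤ n−3−d, s ≤ n−3−d and t ≤ n−3−d; in particular a = kn+j+r+1, b = in+k+s+1 and c = jn+i+t+1. -/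
/-- The key arithmetic step in the characterization of pure gaps at three points:
given the six stated inequalities, the parameters `r = a₀-j-1`, `s = b₀-k-1`,
`t = c₀-i-1`, `d = i+j+k` satisfy `0 ≤ r,s,t ≤ n-3-d` and `d ≤ n-3`, so that
`a = kn+j+r+1`, `b = in+k+s+1`, `c = jn+i+t+1`. -/
theorem stmt_13 (n i j k a₀ b₀ c₀ a b c d r s t : ℤ) (hn : 3 ≤ n)
    (hi0 : 0 ≤ i) (hi1 : i ≤ n - 3)
    (hj0 : 0 ≤ j) (hj1 : j ≤ n - 3)
    (hk0 : 0 ≤ k) (hk1 : k ≤ n - 3)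
    (ha0 : 1 ≤ a₀) (ha1 : a₀ ≤ n - 2 - k)
    (hb0 : 1 ≤ b₀) (hb1 : b₀ ≤ n - 2 - i)
    (hc0 : 1 ≤ c₀) (hc1 : c₀ ≤ n - 2 - j)
    (ha : a = k * n + a₀) (hb : b = i * n + b₀) (hc : c = j * n + c₀)
    (h1 : b < (n - a₀ - k - 1) * (n - 1) + n - a₀)
    (h2 : a < (b₀ - 1) * (n - 1) + n - i - 1)
    (h3 : c < (n - b₀ - i - 1) * (n - 1) + n - b₀)
    (h4 : b < (c₀ - 1) * (n - 1) + n - j - 1)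
    (h5 : a < (n - c₀ - j - 1) * (n - 1) + n - c₀)
    (h6 : c < (a₀ - 1) * (n - 1) + n - k - 1)
    (hd : d = i + j + k) (hr : r = a₀ - j - 1) (hs : s = b₀ - k - 1) (ht : t = c₀ - i - 1) :
    0 ≤ r ∧ 0 ≤ s ∧ 0 ≤ t ∧ d ≤ n - 3 ∧
    r ≤ n - 3 - d ∧ s ≤ n - 3 - d ∧ t ≤ n - 3 - d ∧
    a = k * n + j + r + 1 ∧ b = i * n + k + s + 1 ∧ c = j * n + i + t + 1 := by
  subst hd hr hs ht ha hb hc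
  have hn1 : (0:ℤ) ≤ n - 1 := by linarith
  have R1 : 0 ≤ a₀ - j - 1 := by
    by_contra h; push_neg at h
    nlinarith [mul_nonneg (by linarith : (0:ℤ) ≤ j - a₀) hn1]
  have R2 : 0 ≤ b₀ - k - 1 := by
    by_contra h; push_neg at h
    nlinarith [mul_nonneg (by linarith : (0:ℤ) ≤ k - b₀) hn1]
  have R3 : 0 ≤ c₀ - i - 1 := by
    by_contra h; push_neg at h
    nlinarith [mul_nonneg (by linarith : (0:ℤ) ≤ i - c₀) hn1]
  have R5 : a₀ + i + k + 2 ≤ n := by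
    by_contra h; push_neg at h
    nlinarith [mul_nonneg (by linarith : (0:ℤ) ≤ a₀ + i + k + 1 - n) hn1]
  have R6 : b₀ + i + j + 2 ≤ n := by
    by_contra h; push_neg at h
    nlinarith [mul_nonneg (by linarith : (0:ℤ) ≤ b₀ + i + j + 1 - n) hn1]
  have R7 : c₀ + j + k + 2 ≤ n := by
    by_contra h; push_neg at h
    nlinarith [mul_nonneg (by linarith : (0:ℤ) ≤ c₀ + j + k + 1 - n) hn1]
  refine ⟨R1, R2, R3, by linarith, by linarith, by linarith, by linarith, by ring, by ring, by ring⟩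
end

section
/- Let n ≥ 3 be an integer and set g = n(n−1)/2. Then the set {(kn+j+r+1, in+k+s+1, jn+i+t+1) ∈ ℤ³ : i, j, k, r, s, t ∈ ℤ, i ≥ 0, j ≥ 0, k ≥ 0, i+j+k ≤ n−3, 0 ≤ r ≤ n−3−(i+j+k), 0 ≤ s ≤ n−3−(i+j+k), 0 ≤ t ≤ n−3−(i+j+k)} has exactly (g−1)g(2g−1)/30 elements, i.e. (n−2)(n−1)n(n+1)(n²−n−1)/120 elements. -/
open Finset

private def cfun (m : ℕ) : ℕ := ∑ k ∈ Finset.range m, (k+1)^3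
private def dfun (m : ℕ) : ℕ := ∑ j ∈ Finset.range m, cfun (j+1)
private def efun (m : ℕ) : ℕ := ∑ i ∈ Finset.range m, dfun (i+1)

private lemma hcfun (m : ℕ) : 4 * (cfun m : ℤ) = m^2*(m+1)^2 := by
  induction m with
  | zero => simp [cfun]
  | succ m ih =>
    have h : cfun (m+1) = cfun m + (m+1)^3 := Finset.sum_range_succ _ _
    rw [h]; push_cast; push_cast at ih; linear_combination ih

private lemma hdfun (m : ℕ) : 60 * (dfun m : ℤ) = m*(m+1)*(m+2)*(3*m^2+6*m+1) := by
  induction m with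
  | zero => simp [dfun]
  | succ m ih =>
    have h : dfun (m+1) = dfun m + cfun (m+1) := Finset.sum_range_succ _ _
    have hc := hcfun (m+1)
    rw [h]; push_cast; push_cast at ih hc; linear_combination ih + 15 * hc

private lemma hefun (m : ℕ) : 120 * (efun m : ℤ) = m*(m+1)*(m+2)*(m+3)*(m^2+3*m+1) := by
  induction m with
  | zero => simp [efun]
  | succ m ih =>
    have h : efun (m+1) = efun m + dfun (m+1) := Finset.sum_range_succ _ _
    have hd := hdfun (m+1)
    rw [h]; push_cast; push_cast at ih hd; linear_combination ih + 2 * hd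

private lemma sum_sub (f : ℕ → ℕ) (m : ℕ) :
    ∑ k ∈ Finset.range m, f (m - k) = ∑ k ∈ Finset.range m, f (k+1) := by
  rw [← Finset.sum_range_reflect]
  exact Finset.sum_congr rfl fun k hk => by
    simp only [Finset.mem_range] at hk; congr 1; omega

private def Sset (N : ℕ) : Finset ((_ : ℕ) × (_ : ℕ) × (_ : ℕ) × ℕ × ℕ × ℕ) :=
  (range (N+1)).sigma fun i => (range (N+1-i)).sigma fun j => (range (N+1-i-j)).sigma fun k =>
    (range (N-i-j-k+1)) ×ˢ (range (N-i-j-k+1)) ×ˢ (range (N-i-j-k+1))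

private def φmap (n : ℤ) (p : (_ : ℕ) × (_ : ℕ) × (_ : ℕ) × ℕ × ℕ × ℕ) : ℤ × ℤ × ℤ :=
  ((p.2.2.1 : ℤ) * n + p.2.1 + p.2.2.2.1 + 1,
   (p.1 : ℤ) * n + p.2.2.1 + p.2.2.2.2.1 + 1,
   (p.2.1 : ℤ) * n + p.1 + p.2.2.2.2.2 + 1)

private lemma mem_Sset {N : ℕ} {i j k r s t : ℕ} :
    (⟨i, j, k, r, s, t⟩ : (_ : ℕ) × (_ : ℕ) × (_ : ℕ) × ℕ × ℕ × ℕ) ∈ Sset N ↔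
      i < N+1 ∧ j < N+1-i ∧ k < N+1-i-j ∧ r < N-i-j-k+1 ∧ s < N-i-j-k+1 ∧ t < N-i-j-k+1 := by
  simp [Sset, Finset.mem_sigma, Finset.mem_product, Finset.mem_range, and_assoc]

private lemma card_Sset (N : ℕ) : (Sset N).card = efun (N+1) := by
  have h1 : (Sset N).card = ∑ i ∈ range (N+1), ∑ j ∈ range (N+1-i),
      ∑ k ∈ range (N+1-i-j), (N-i-j-k+1)^3 := by
    simp only [Sset, Finset.card_sigma, Finset.card_product, Finset.card_range]
    exact sum_congr rfl fun i _ => sum_congr rfl fun j _ => sum_congr rfl fun k _ => by ring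
  rw [h1]
  calc ∑ i ∈ range (N+1), ∑ j ∈ range (N+1-i), ∑ k ∈ range (N+1-i-j), (N-i-j-k+1)^3
      = ∑ i ∈ range (N+1), ∑ j ∈ range (N+1-i), ∑ k ∈ range (N+1-i-j), (N+1-i-j-k)^3 := by
        refine sum_congr rfl fun i _ => sum_congr rfl fun j _ => sum_congr rfl fun k hk => ?_
        simp only [mem_range] at hk; congr 1; omega
    _ = ∑ i ∈ range (N+1), ∑ j ∈ range (N+1-i), cfun (N+1-i-j) :=
        sum_congr rfl fun i _ => sum_congr rfl fun j _ => sum_sub (fun x => x^3) (N+1-i-j)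
    _ = ∑ i ∈ range (N+1), dfun (N+1-i) :=
        sum_congr rfl fun i _ => sum_sub cfun (N+1-i)
    _ = efun (N+1) := sum_sub dfun (N+1)

private lemma key (n a₁ a₂ k₁ k₂ : ℤ) (h : k₁*n + a₁ = k₂*n + a₂) (h1 : 0 ≤ a₁) (h2 : a₁ < n)
    (h3 : 0 ≤ a₂) (h4 : a₂ < n) : k₁ = k₂ ∧ a₁ = a₂ := by
  have hk : (k₁ - k₂) * n = a₂ - a₁ := by ring_nf; linarith
  have hkk : k₁ = k₂ := by
    rcases lt_trichotomy k₁ k₂ with hlt | heq | hgt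
    · nlinarith
    · exact heq
    · nlinarith
  exact ⟨hkk, by rw [hkk] at h; linarith⟩

set_option maxHeartbeats 1600000 in
/-- The set `{(kn+j+r+1, in+k+s+1, jn+i+t+1) : i,j,k ≥ 0, i+j+k ≤ n-3,
0 ≤ r,s,t ≤ n-3-(i+j+k)}` has exactly
`(g-1)g(2g-1)/30 = (n-2)(n-1)n(n+1)(n²-n-1)/120` elements, where `g = n(n-1)/2`. -/
theorem stmt_15 (n : ℤ) (hn : 3 ≤ n) (g : ℤ) (hg : g = n * (n - 1) / 2)
    (T : Set (ℤ × ℤ × ℤ))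
    (hT : T = {p : ℤ × ℤ × ℤ | ∃ i j k r s t : ℤ,
      0 ≤ i ∧ 0 ≤ j ∧ 0 ≤ k ∧ i + j + k ≤ n - 3 ∧
      0 ≤ r ∧ r ≤ n - 3 - (i + j + k) ∧
      0 ≤ s ∧ s ≤ n - 3 - (i + j + k) ∧
      0 ≤ t ∧ t ≤ n - 3 - (i + j + k) ∧
      p = (k * n + j + r + 1, i * n + k + s + 1, j * n + i + t + 1)}) :
    (T.ncard : ℤ) = (g - 1) * g * (2 * g - 1) / 30 ∧
    (T.ncard : ℤ) = (n - 2) * (n - 1) * n * (n + 1) * (n ^ 2 - n - 1) / 120 := by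
  set N : ℕ := (n-3).toNat with hNdef
  have hN : ((N : ℤ)) = n - 3 := Int.toNat_of_nonneg (by omega)
  -- T is the image of the parameter finset
  have hTeq : T = φmap n '' (Sset N : Set _) := by
    ext p
    simp only [hT, Set.mem_setOf_eq, Set.mem_image, Finset.mem_coe]
    constructor
    · rintro ⟨i, j, k, r, s, t, hi, hj, hk, hsum, hr1, hr2, hs1, hs2, ht1, ht2, rfl⟩
      refine ⟨⟨i.toNat, j.toNat, k.toNat, r.toNat, s.toNat, t.toNat⟩, mem_Sset.mpr (by omega), ?_⟩
      simp only [φmap, Int.toNat_of_nonneg hi, Int.toNat_of_nonneg hj, Int.toNat_of_nonneg hk,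
        Int.toNat_of_nonneg hr1, Int.toNat_of_nonneg hs1, Int.toNat_of_nonneg ht1]
    · rintro ⟨⟨i, j, k, r, s, t⟩, hmem, rfl⟩
      rw [mem_Sset] at hmem
      exact ⟨i, j, k, r, s, t, by positivity, by positivity, by positivity, by omega,
        by positivity, by omega, by positivity, by omega, by positivity, by omega, rfl⟩
  -- the parametrization is injective
  have hinj : Set.InjOn (φmap n) (Sset N : Set _) := by
    rintro ⟨i1, j1, k1, r1, s1, t1⟩ h1 ⟨i2, j2, k2, r2, s2, t2⟩ h2 heq
    simp only [Finset.mem_coe, mem_Sset] at h1 h2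
    simp only [φmap, Prod.mk.injEq] at heq
    obtain ⟨e1, e2, e3⟩ := heq
    have c1 := key n ((j1:ℤ)+r1) ((j2:ℤ)+r2) k1 k2 (by linarith)
      (by positivity) (by omega) (by positivity) (by omega)
    have c2 := key n ((k1:ℤ)+s1) ((k2:ℤ)+s2) i1 i2 (by linarith)
      (by positivity) (by omega) (by positivity) (by omega)
    have c3 := key n ((i1:ℤ)+t1) ((i2:ℤ)+t2) j1 j2 (by linarith)
      (by positivity) (by omega) (by positivity) (by omega)
    obtain ⟨g1, g2⟩ := c1; obtain ⟨g3, g4⟩ := c2; obtain ⟨g5, g6⟩ := c3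
    have : i1 = i2 ∧ j1 = j2 ∧ k1 = k2 ∧ r1 = r2 ∧ s1 = s2 ∧ t1 = t2 := by omega
    obtain ⟨rfl, rfl, rfl, rfl, rfl, rfl⟩ := this
    rfl
  have hcard : T.ncard = efun (N+1) := by
    rw [hTeq, Set.ncard_image_of_injOn hinj, Set.ncard_coe_finset, card_Sset]
  have h120 : 120 * (T.ncard : ℤ) = (n - 2) * (n - 1) * n * (n + 1) * (n ^ 2 - n - 1) := by
    rw [hcard]
    have h := hefun (N+1)
    push_cast at h
    rw [hN] at h
    linear_combination h
  have h2g : 2 * g = n * (n - 1) := by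
    have hev : Even ((n-1) * (n-1+1)) := Int.even_mul_succ_self (n-1)
    have hdvd : (2:ℤ) ∣ n * (n-1) := by
      rcases hev with ⟨c, hc⟩
      exact ⟨c, by linarith⟩
    rw [hg, Int.mul_ediv_cancel' hdvd]
  have h30 : 30 * (T.ncard : ℤ) = (g - 1) * g * (2 * g - 1) := by
    have h4 : 4 * (30 * (T.ncard : ℤ)) = 4 * ((g - 1) * g * (2 * g - 1)) := by
      linear_combination h120 - (4*g^2 + 2*g*(n^2-n) + (n^2-n)^2 - 3*(2*g + n^2 - n) + 2) * h2g
    linarith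
  constructor
  · rw [← h30, Int.mul_ediv_cancel_left _ (by norm_num : (30:ℤ) ≠ 0)]
  · rw [← h120, Int.mul_ediv_cancel_left _ (by norm_num : (120:ℤ) ≠ 0)]
end
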